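/- arXiv:quant-ph/0106099 — 3 statements merged into one kernel-verified Lean document; each statement's English description precedes it below -/
import Mathlib

section
/- For any α ∈ ℝ³ with α₁² + α₂² + α₃² = (2π)², we have exp(-2πi I_z) · exp(-i(α₁ I_x + α₂ I_y + α₃ I_z)) = 1, the 2×2 identity matrix. -/
open Matrix NormedSpace Real
open scoped Matrix Kronecker

noncomputable section

def Ix : Matrix (Fin 2) (Fin 2) ℂ := (1/2 : ℂ) • !![0, 1; 1, 0]
def Iy : Matrix (Fin 2) (Fin 2) ℂ := (1/2 : ℂ) • !![0, -Complex.I; Complex.I, 0]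
def Iz : Matrix (Fin 2) (Fin 2) ℂ := (1/2 : ℂ) • !![1, 0; 0, -1]

/-!
Both exponents have the form `-(i • S)` with `S * S = π² • 1`: for the Pauli vector this is
`(α₁ Ix + α₂ Iy + α₃ Iz)² = (|α|² / 4) • 1`. Then `J = -(i / π) • S` squares to `-1`, so
`i ↦ J` is an `ℝ`-algebra map `ℂ → A`, along which Euler's formula becomes
`exp (θ • J) = cos θ + sin θ • J`. At `θ = π` each factor is `-1`.
-/

section

variable {A : Type*} [NormedRing A]

theorem exp_real_smul_of_mul_self_eq_neg_one [NormedAlgebra ℝ A] {J : A} (hJ : J * J = -1)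
    (θ : ℝ) : NormedSpace.exp (θ • J) = Real.cos θ • 1 + Real.sin θ • J := by
  -- `map_exp` asks for a `ℚ`-algebra structure on `A`; any one gives the same `exp`.
  let _ : Algebra ℚ A := RestrictScalars.algebra ℚ ℝ A
  let f : ℂ →ₐ[ℝ] A := Complex.lift ⟨J, hJ⟩
  have hf : Continuous f := f.toLinearMap.continuous_of_finiteDimensional
  have hfθ : f (θ * Complex.I) = θ • J := by
    simp [f, ← Complex.real_smul]
  rw [← hfθ, ← NormedSpace.map_exp f hf, ← Complex.exp_eq_exp_ℂ, Complex.exp_mul_I]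
  simp [f, Algebra.algebraMap_eq_smul_one, Complex.cos_ofReal_re, Complex.sin_ofReal_re]

theorem exp_neg_I_smul_of_mul_self_eq_pi_sq [NormedAlgebra ℂ A] {S : A}
    (hS : S * S = ((π : ℂ) ^ 2) • 1) : NormedSpace.exp (-(Complex.I • S)) = -1 := by
  set J : A := (-(Complex.I / π)) • S
  have hπ : (π : ℂ) ≠ 0 := Complex.ofReal_ne_zero.mpr Real.pi_ne_zero
  have hJ : J * J = -1 := by
    rw [smul_mul_smul_comm, hS, smul_smul]
    field_simp
    simp [Complex.I_sq]
  have hIS : -(Complex.I • S) = π • J := by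
    rw [← Complex.coe_smul, smul_smul, ← neg_smul]
    congr 1
    field_simp
  simp [hIS, exp_real_smul_of_mul_self_eq_neg_one hJ]

end

theorem Matrix.exp_neg_I_smul_of_mul_self_eq_pi_sq {n : Type*} [Fintype n] [DecidableEq n]
    {S : Matrix n n ℂ} (hS : S * S = ((π : ℂ) ^ 2) • 1) :
    NormedSpace.exp (-(Complex.I • S)) = -1 := by
  -- Any matrix norm inducing the product topology will do; `exp` only sees the topology.
  let _ : NormedRing (Matrix n n ℂ) := Matrix.linftyOpNormedRing
  let _ : NormedAlgebra ℂ (Matrix n n ℂ) := Matrix.linftyOpNormedAlgebra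
  exact _root_.exp_neg_I_smul_of_mul_self_eq_pi_sq hS

theorem pauli_vector_mul_self (a b c : ℂ) :
    (a • Ix + b • Iy + c • Iz) * (a • Ix + b • Iy + c • Iz) =
      ((a ^ 2 + b ^ 2 + c ^ 2) / 4) • 1 := by
  ext i j
  fin_cases i <;> fin_cases j <;>
    simp [Ix, Iy, Iz, Matrix.mul_apply, Fin.sum_univ_two] <;>
    ring_nf <;> simp [Complex.I_sq] <;> ring

theorem exp_z_exp_pauli_sphere_eq_one (α₁ α₂ α₃ : ℝ)
    (h : α₁ ^ 2 + α₂ ^ 2 + α₃ ^ 2 = (2 * Real.pi) ^ 2) :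
    NormedSpace.exp ((-(2 * (Real.pi : ℂ) * Complex.I)) • Iz) *
      NormedSpace.exp (-(Complex.I • ((α₁ : ℂ) • Ix + (α₂ : ℂ) • Iy + (α₃ : ℂ) • Iz))) =
      (1 : Matrix (Fin 2) (Fin 2) ℂ) := by
  have hz : (-(2 * (π : ℂ) * Complex.I)) • Iz = -(Complex.I • ((2 * π : ℂ) • Iz)) := by
    rw [smul_smul, ← neg_smul, mul_comm]
  have hz_sq : ((2 * π : ℂ) • Iz) * ((2 * π : ℂ) • Iz) = ((π : ℂ) ^ 2) • 1 := by
    have h2π := pauli_vector_mul_self 0 0 (2 * π)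
    simp only [zero_smul, zero_add] at h2π
    rw [h2π]
    ring_nf
  have hα_sq : ((α₁ : ℂ) • Ix + (α₂ : ℂ) • Iy + (α₃ : ℂ) • Iz) *
      ((α₁ : ℂ) • Ix + (α₂ : ℂ) • Iy + (α₃ : ℂ) • Iz) = ((π : ℂ) ^ 2) • 1 := by
    have hC : (α₁ : ℂ) ^ 2 + α₂ ^ 2 + α₃ ^ 2 = (2 * π) ^ 2 := by exact_mod_cast h
    rw [pauli_vector_mul_self, hC]
    ring_nf
  rw [hz, Matrix.exp_neg_I_smul_of_mul_self_eq_pi_sq hz_sq,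
    Matrix.exp_neg_I_smul_of_mul_self_eq_pi_sq hα_sq, neg_mul_neg, one_mul]
end
end

section
/- If A, B, C are n×n complex matrices satisfying [A,B] = C, [B,C] = A, [C,A] = B, then for all real t, exp(tA) exp(sB) exp(-tA) = exp(s(B cos t + C sin t)) for all real s. -/
/-!
`B + iC` and `B - iC` are eigenvectors of `ad A` with eigenvalues `-i` and `i`, so conjugation by
`exp (tA)` multiplies them by `e^{-it}` and `e^{it}`; recombining them, conjugation rotates `B`
into `cos t • B + sin t • C`. Conjugation by a unit commutes with `exp`, which gives the claim.
-/

open Matrix NormedSpace Real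

noncomputable section

theorem commutator_add_smul_eq_neg_smul {K R : Type*} [CommRing K] [Ring R] [Algebra K R]
    {a b c : R} (hab : a * b - b * a = c) (hca : c * a - a * c = b) {z : K} (hz : z * z = -1) :
    a * (b + z • c) - (b + z • c) * a = (-z) • (b + z • c) :=
  calc a * (b + z • c) - (b + z • c) * a = (a * b - b * a) - z • (c * a - a * c) := by
        simp only [mul_add, add_mul, mul_smul_comm, smul_mul_assoc, smul_sub]; abel
    _ = (-z) • (b + z • c) := by
        rw [hab, hca, smul_add, smul_smul, neg_mul, hz, neg_neg, one_smul, neg_smul]; abel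

namespace NormedSpace

section RatAlgebra

variable {𝔸 : Type*} [NormedRing 𝔸] [NormedAlgebra ℚ 𝔸] [CompleteSpace 𝔸]

theorem exp_mul_exp_neg_self (a : 𝔸) : exp a * exp (-a) = 1 := by
  rw [← exp_add_of_commute (Commute.refl a).neg_right, add_neg_cancel, exp_zero]

theorem exp_mul_exp_mul_exp_neg (a x : 𝔸) :
    exp a * exp x * exp (-a) = exp (exp a * x * exp (-a)) := by
  let := invertibleExp a
  simpa [← invOf_exp] using (exp_units_conj (unitOfInvertible (exp a)) x).symm

end RatAlgebra

section ComplexAlgebra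

variable {𝔸 : Type*} [NormedRing 𝔸] [NormedAlgebra ℂ 𝔸] [CompleteSpace 𝔸]

theorem exp_mul_mul_exp_neg_of_commutator_eq_smul {a p : 𝔸} {c : ℂ}
    (h : a * p - p * a = c • p) : exp a * p * exp (-a) = Complex.exp c • p := by
  let +nondep : NormedAlgebra ℚ 𝔸 := .restrictScalars ℚ ℂ 𝔸
  have hsemi : SemiconjBy p (a + algebraMap ℂ 𝔸 c) a := by
    rw [SemiconjBy, mul_add, ← Algebra.commutes, ← Algebra.smul_def]
    linear_combination (norm := noncomm_ring) -h
  have hexp : exp (a + algebraMap ℂ 𝔸 c) = Complex.exp c • exp a := by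
    rw [exp_add_of_commute (Algebra.commutes c a).symm, Complex.exp_eq_exp_ℂ,
      ← algebraMap_exp_comm, ← Algebra.commutes, ← Algebra.smul_def]
  rw [← hsemi.exp_right.eq, hexp, mul_smul_comm, smul_mul_assoc, mul_assoc,
    exp_mul_exp_neg_self, mul_one]

theorem exp_smul_mul_mul_exp_neg_smul_eq_cos_smul_add_sin_smul {a b c : 𝔸}
    (hab : a * b - b * a = c) (hca : c * a - a * c = b) (t : ℂ) :
    exp (t • a) * b * exp (-(t • a)) = Complex.cos t • b + Complex.sin t • c := by
  have conj_eigen (z : ℂ) (hz : z * z = -1) :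
      exp (t • a) * (b + z • c) * exp (-(t • a)) = Complex.exp (-(t * z)) • (b + z • c) :=
    exp_mul_mul_exp_neg_of_commutator_eq_smul <| by
      rw [smul_mul_assoc, mul_smul_comm, ← smul_sub,
        commutator_add_smul_eq_neg_smul hab hca hz, smul_smul, mul_neg]
  calc exp (t • a) * b * exp (-(t • a))
      = (2⁻¹ : ℂ) • (exp (t • a) * (b + Complex.I • c) * exp (-(t • a)) +
          exp (t • a) * (b + (-Complex.I) • c) * exp (-(t • a))) := by
        rw [← add_mul, ← mul_add, ← smul_mul_assoc, ← mul_smul_comm]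
        congr 2
        module
    _ = (2⁻¹ : ℂ) • (Complex.exp (-(t * Complex.I)) • (b + Complex.I • c) +
          Complex.exp (-(t * -Complex.I)) • (b + (-Complex.I) • c)) := by
        rw [conj_eigen _ Complex.I_mul_I, conj_eigen _ (by rw [neg_mul_neg, Complex.I_mul_I])]
    _ = Complex.cos t • b + Complex.sin t • c := by
        rw [Complex.cos, Complex.sin]
        match_scalars <;> ring_nf

end ComplexAlgebra

end NormedSpace

theorem exp_conj_exp_so3_general {n : ℕ} (A B C : Matrix (Fin n) (Fin n) ℂ)
    (hAB : A * B - B * A = C) (hCA : C * A - A * C = B)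
    (t s : ℝ) :
    NormedSpace.exp ((t : ℂ) • A) * NormedSpace.exp ((s : ℂ) • B) * NormedSpace.exp ((-t : ℂ) • A) =
      NormedSpace.exp ((s : ℂ) • ((Real.cos t : ℂ) • B + (Real.sin t : ℂ) • C)) := by
  have hconj : NormedSpace.exp ((t : ℂ) • A) * B * NormedSpace.exp ((-t : ℂ) • A) =
      (Real.cos t : ℂ) • B + (Real.sin t : ℂ) • C := by
    rw [neg_smul, Complex.ofReal_cos, Complex.ofReal_sin]
    open scoped Matrix.Norms.Operator in
    exact exp_smul_mul_mul_exp_neg_smul_eq_cos_smul_add_sin_smul hAB hCA t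
  rw [← hconj, ← smul_mul_assoc, ← mul_smul_comm, neg_smul]
  open scoped Matrix.Norms.Operator in
  exact exp_mul_exp_mul_exp_neg _ _

theorem exp_conj_exp_so3 {n : ℕ} (A B C : Matrix (Fin n) (Fin n) ℂ)
    (hAB : A * B - B * A = C) (hBC : B * C - C * B = A) (hCA : C * A - A * C = B)
    (t s : ℝ) :
    NormedSpace.exp ((t : ℂ) • A) * NormedSpace.exp ((s : ℂ) • B) * NormedSpace.exp ((-t : ℂ) • A) =
      NormedSpace.exp ((s : ℂ) • ((Real.cos t : ℂ) • B + (Real.sin t : ℂ) • C)) :=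
  exp_conj_exp_so3_general A B C hAB hCA t s
end
end

section
/- In the 8-dimensional three-spin system, the operators A = -i(I_{1z}I_{2x} + I_{2x}I_{3z}), B = -i(I_{1z}I_{2y} + I_{2y}I_{3z}), C = -i(2 I_{1z}I_{2z}I_{3z} + I_{2z}/2) satisfy the so(3) relations [A,B] = C, [B,C] = A, [C,A] = B. -/
open Matrix NormedSpace Real
open scoped Matrix Kronecker

noncomputable section

abbrev Spin3 := Matrix (Fin 2 × Fin 2 × Fin 2) (Fin 2 × Fin 2 × Fin 2) ℂ

/-- The operator acting as `P`, `Q`, `R` on the three tensor factors of `(ℂ²)⊗³`. -/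
def triple (P Q R : Matrix (Fin 2) (Fin 2) ℂ) : Spin3 := P ⊗ₖ (Q ⊗ₖ R)

def I1x : Spin3 := triple Ix 1 1
def I1y : Spin3 := triple Iy 1 1
def I1z : Spin3 := triple Iz 1 1
def I2x : Spin3 := triple 1 Ix 1
def I2y : Spin3 := triple 1 Iy 1
def I2z : Spin3 := triple 1 Iz 1
def I3x : Spin3 := triple 1 1 Ix
def I3y : Spin3 := triple 1 1 Iy
def I3z : Spin3 := triple 1 1 Iz

/-!
Put `S = I₁z + I₃z`. It commutes with the second spin, and `S³ = S` because `I₁z`, `I₃z` are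
commuting square roots of `1/4` (so `S² = 1/2 + 2 I₁z I₃z`). Hence `A = -i I₂x S`,
`B = -i I₂y S`, `C = -i I₂z S²`, and the spin relations `[I₂x, I₂y] = i I₂z` (cyclically) give
`[A, B] = -[I₂x, I₂y] S² = C`, `[B, C] = -[I₂y, I₂z] S³ = A` and `[C, A] = -[I₂z, I₂x] S³ = B`.
-/

theorem lie_Ix_Iy : ⁅Ix, Iy⁆ = Complex.I • Iz := by
  ext i j; fin_cases i <;> fin_cases j <;> norm_num [Ring.lie_def, Ix, Iy, Iz, Complex.ext_iff]

theorem lie_Iy_Iz : ⁅Iy, Iz⁆ = Complex.I • Ix := by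
  ext i j; fin_cases i <;> fin_cases j <;> norm_num [Ring.lie_def, Ix, Iy, Iz, Complex.ext_iff]

theorem lie_Iz_Ix : ⁅Iz, Ix⁆ = Complex.I • Iy := by
  ext i j; fin_cases i <;> fin_cases j <;> norm_num [Ring.lie_def, Ix, Iy, Iz, Complex.ext_iff]

theorem Iz_mul_self : Iz * Iz = (1 / 4 : ℂ) • 1 := by
  ext i j; fin_cases i <;> fin_cases j <;> norm_num [Iz]

section triple

variable (P Q R P' Q' R' : Matrix (Fin 2) (Fin 2) ℂ)

theorem triple_mul : triple P Q R * triple P' Q' R' = triple (P * P') (Q * Q') (R * R') := by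
  simp only [triple, ← mul_kronecker_mul]

theorem triple_one : triple 1 1 1 = 1 := by
  simp only [triple, one_kronecker_one]

theorem triple_smul_left (c : ℂ) : triple (c • P) Q R = c • triple P Q R := by
  simp only [triple, smul_kronecker]

theorem triple_smul_middle (c : ℂ) : triple P (c • Q) R = c • triple P Q R := by
  simp only [triple, smul_kronecker, kronecker_smul]

theorem triple_smul_right (c : ℂ) : triple P Q (c • R) = c • triple P Q R := by
  simp only [triple, kronecker_smul]

theorem triple_sub_middle : triple P (Q - Q') R = triple P Q R - triple P Q' R := by
  ext ⟨a, b, c⟩ ⟨a', b', c'⟩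
  simp only [triple, kronecker_apply, Matrix.sub_apply]
  ring

theorem lie_triple_middle : ⁅triple 1 Q 1, triple 1 Q' 1⁆ = triple 1 ⁅Q, Q'⁆ 1 := by
  simp only [Ring.lie_def, triple_mul, triple_sub_middle, mul_one]

variable {P Q R P' Q' R'}

theorem commute_triple (hP : Commute P P') (hQ : Commute Q Q') (hR : Commute R R') :
    Commute (triple P Q R) (triple P' Q' R') := by
  simp only [Commute, SemiconjBy, triple_mul, hP.eq, hQ.eq, hR.eq]

end triple

section commuting

variable {K R : Type*} [CommRing K] [Ring R] [Algebra K R]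

theorem Commute.add_sq_of_sq_eq_smul_one {P Q : R} (h : Commute P Q) {c : K}
    (hP : P ^ 2 = c • 1) (hQ : Q ^ 2 = c • 1) : (P + Q) ^ 2 = (2 * c) • 1 + (2 : K) • (P * Q) := by
  rw [h.add_sq, hP, hQ, two_mul, add_mul]
  module

theorem Commute.add_pow_three_of_sq_eq_smul_one {P Q : R} (h : Commute P Q) {c : K}
    (hP : P ^ 2 = c • 1) (hQ : Q ^ 2 = c • 1) : (P + Q) ^ 3 = (4 * c) • (P + Q) := by
  have hPQP : P * Q * P = c • Q := by rw [mul_assoc, ← h.eq, ← mul_assoc, ← sq, hP, smul_one_mul]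
  have hPQQ : P * Q * Q = c • P := by rw [mul_assoc, ← sq, hQ, mul_smul_one]
  rw [pow_succ, h.add_sq_of_sq_eq_smul_one hP hQ, add_mul, smul_mul_assoc, smul_mul_assoc,
    mul_add, mul_add, hPQP, hPQQ, one_mul, one_mul]
  module

theorem lie_mul_pow_mul_pow {U V S : R} (hU : Commute U S) (hV : Commute V S) (m n : ℕ) :
    ⁅U * S ^ m, V * S ^ n⁆ = ⁅U, V⁆ * S ^ (m + n) := by
  simp only [Ring.lie_def, sub_mul, pow_add, mul_assoc, (hV.pow_right m).symm.left_comm,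
    (hU.pow_right n).symm.left_comm, pow_mul_comm S n m]

end commuting

theorem so3_relations_of_spin_mul_commuting {R : Type*} [Ring R] [Algebra ℂ R] {X Y Z S : R}
    (hXY : ⁅X, Y⁆ = Complex.I • Z) (hYZ : ⁅Y, Z⁆ = Complex.I • X) (hZX : ⁅Z, X⁆ = Complex.I • Y)
    (hX : Commute X S) (hY : Commute Y S) (hZ : Commute Z S) (hS : S ^ 3 = S) :
    let a := -Complex.I • (X * S)
    let b := -Complex.I • (Y * S)
    let c := -Complex.I • (Z * S ^ 2)
    ⁅a, b⁆ = c ∧ ⁅b, c⁆ = a ∧ ⁅c, a⁆ = b := by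
  have key : ∀ {U V : R}, Commute U S → Commute V S → ∀ m n : ℕ,
      ⁅-Complex.I • (U * S ^ m), -Complex.I • (V * S ^ n)⁆ = -(⁅U, V⁆ * S ^ (m + n)) := by
    intro U V hU hV m n
    rw [Ring.lie_def, smul_mul_smul_comm, smul_mul_smul_comm, ← smul_sub, ← Ring.lie_def,
      lie_mul_pow_mul_pow hU hV, neg_mul_neg, Complex.I_mul_I, neg_one_smul]
  refine ⟨?_, ?_, ?_⟩
  · simpa [hXY] using key hX hY 1 1
  · simpa [hYZ, hS] using key hY hZ 1 2
  · simpa [hZX, hS] using key hZ hX 2 1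

theorem lie_I2x_I2y : ⁅I2x, I2y⁆ = Complex.I • I2z := by
  rw [I2x, I2y, lie_triple_middle, lie_Ix_Iy, triple_smul_middle, I2z]

theorem lie_I2y_I2z : ⁅I2y, I2z⁆ = Complex.I • I2x := by
  rw [I2y, I2z, lie_triple_middle, lie_Iy_Iz, triple_smul_middle, I2x]

theorem lie_I2z_I2x : ⁅I2z, I2x⁆ = Complex.I • I2y := by
  rw [I2z, I2x, lie_triple_middle, lie_Iz_Ix, triple_smul_middle, I2y]

theorem I1z_sq : I1z ^ 2 = (1 / 4 : ℂ) • 1 := by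
  rw [sq, I1z, triple_mul, Iz_mul_self, one_mul, triple_smul_left, triple_one]

theorem I3z_sq : I3z ^ 2 = (1 / 4 : ℂ) • 1 := by
  rw [sq, I3z, triple_mul, Iz_mul_self, one_mul, triple_smul_right, triple_one]

theorem commute_I1z_I3z : Commute I1z I3z :=
  commute_triple (.one_right _) (.refl _) (.one_left _)

theorem commute_I1z_middle (P : Matrix (Fin 2) (Fin 2) ℂ) : Commute I1z (triple 1 P 1) :=
  commute_triple (.one_right _) (.one_left _) (.refl _)

theorem commute_middle_I1z_add_I3z (P : Matrix (Fin 2) (Fin 2) ℂ) :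
    Commute (triple 1 P 1) (I1z + I3z) :=
  (commute_I1z_middle P).symm.add_right
    (commute_triple (.refl _) (.one_right _) (.one_left _))

theorem threeSpin_so3_relations :
    let A : Spin3 := (-Complex.I) • (I1z * I2x + I2x * I3z)
    let B : Spin3 := (-Complex.I) • (I1z * I2y + I2y * I3z)
    let C : Spin3 := (-Complex.I) • ((2 : ℂ) • (I1z * I2z * I3z) + (1/2 : ℂ) • I2z)
    A * B - B * A = C ∧ B * C - C * B = A ∧ C * A - A * C = B := by
  intro A B C
  have h1x : Commute I1z I2x := commute_I1z_middle Ix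
  have h1y : Commute I1z I2y := commute_I1z_middle Iy
  have h1z : Commute I1z I2z := commute_I1z_middle Iz
  have h_sq := commute_I1z_I3z.add_sq_of_sq_eq_smul_one I1z_sq I3z_sq
  have h_cube : (I1z + I3z) ^ 3 = I1z + I3z := by
    rw [commute_I1z_I3z.add_pow_three_of_sq_eq_smul_one I1z_sq I3z_sq]
    norm_num
  have hA : A = -Complex.I • (I2x * (I1z + I3z)) := by rw [mul_add, ← h1x.eq]
  have hB : B = -Complex.I • (I2y * (I1z + I3z)) := by rw [mul_add, ← h1y.eq]
  have hC : C = -Complex.I • (I2z * (I1z + I3z) ^ 2) := by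
    rw [h_sq, mul_add, mul_smul_comm, mul_smul_comm, mul_one, ← mul_assoc, ← h1z.eq]
    module
  obtain ⟨hAB, hBC, hCA⟩ := so3_relations_of_spin_mul_commuting lie_I2x_I2y lie_I2y_I2z lie_I2z_I2x
    (commute_middle_I1z_add_I3z Ix) (commute_middle_I1z_add_I3z Iy) (commute_middle_I1z_add_I3z Iz)
    h_cube
  simp only [← Ring.lie_def, hA, hB, hC]
  exact ⟨hAB, hBC, hCA⟩
end
end
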